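/- arXiv:1503.08196 — 4 statements merged into one kernel-verified Lean document; each statement's English description precedes it below -/
import Mathlib

section
/- If w(z) = 1/(z m(z) m̃(z)) where m and m̃ are the Stieltjes transforms of the Marcenko-Pastur distributions μ_{σ²,c} and cμ_{σ²,c} + (1-c)δ₀ respectively, then φ(w(z)) = z for all real z > σ²(1+√c)², where φ(w) = (w + σ²)(w + σ²c)/w. -/
/- The fixed-point equation for `m` says exactly that `w + σ² = -1/m̃`, and the one for `m̃`
that `w + σ²c = -1/m`; multiplying the two gives `(w + σ²)(w + σ²c) = 1/(m m̃) = x w`. -/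

theorem one_div_mul_mul_add_eq_neg_one_div {K : Type*} [Field K] {x m n a : K}
    (hm0 : m ≠ 0) (hn0 : n ≠ 0) (hm : m = 1 / (-x * (1 + a * n))) :
    1 / (x * m * n) + a = -1 / n := by
  have hden : -x * (1 + a * n) ≠ 0 := by
    intro h
    rw [h, div_zero] at hm
    exact hm0 hm
  have hx : x ≠ 0 := by
    rintro rfl
    simp at hden
  have hmul : m * (-x * (1 + a * n)) = 1 := by
    rw [hm]
    exact one_div_mul_cancel hden
  field_simp
  linear_combination -hmul

theorem stmt5_general (σ2 c : ℝ)
    (x : ℝ)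
    (m mt : ℂ) (hm0 : m ≠ 0) (hmt0 : mt ≠ 0)
    (hm : m = 1 / (-(x : ℂ) * (1 + (σ2 : ℂ) * mt)))
    (hmt : mt = 1 / (-(x : ℂ) * (1 + (σ2 : ℂ) * (c : ℂ) * m))) :
    (1 / ((x : ℂ) * m * mt) + (σ2 : ℂ)) * (1 / ((x : ℂ) * m * mt) + (σ2 : ℂ) * (c : ℂ)) /
        (1 / ((x : ℂ) * m * mt)) = (x : ℂ) := by
  have hw_add_σ2 : 1 / ((x : ℂ) * m * mt) + σ2 = -1 / mt :=
    one_div_mul_mul_add_eq_neg_one_div hm0 hmt0 hm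
  have hw_add_σ2c : 1 / ((x : ℂ) * m * mt) + σ2 * c = -1 / m := by
    rw [mul_right_comm]
    exact one_div_mul_mul_add_eq_neg_one_div hmt0 hm0 hmt
  rw [hw_add_σ2, hw_add_σ2c]
  field_simp

/-- If `m, m̃` satisfy the coupled Marcenko-Pastur fixed-point equations at a real point
`x > σ²(1+√c)²`, and `w = 1/(x m m̃)`, then `φ(w) = (w+σ²)(w+σ²c)/w = x`. -/
theorem stmt5 (σ2 c : ℝ) (hσ : 0 < σ2) (hc : 0 < c)
    (x : ℝ) (hx : σ2 * (1 + Real.sqrt c) ^ 2 < x)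
    (m mt : ℂ) (hm0 : m ≠ 0) (hmt0 : mt ≠ 0)
    (hm : m = 1 / (-(x : ℂ) * (1 + (σ2 : ℂ) * mt)))
    (hmt : mt = 1 / (-(x : ℂ) * (1 + (σ2 : ℂ) * (c : ℂ) * m))) :
    (1 / ((x : ℂ) * m * mt) + (σ2 : ℂ)) * (1 / ((x : ℂ) * m * mt) + (σ2 : ℂ) * (c : ℂ)) /
        (1 / ((x : ℂ) * m * mt)) = (x : ℂ) :=
  stmt5_general σ2 c x m mt hm0 hmt0 hm hmt
end

section
/- The function h(z) defined via w(z) by h(z) = (w(z)² - σ⁴c)/(w(z)(w(z) + σ²c)) satisfies the identity h(z) = z m(z)² m̃(z) / (d/dz)(z m(z) m̃(z)), for z real with z > σ²(1+√c)², where m, m̃ are the Marcenko-Pastur Stieltjes transforms satisfying the coupled fixed-point equations. -/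
/-!
Write `g = z m m̃`. The fixed-point equations say `z m = -(1 + σ² g)` and `z m̃ = -(1 + σ² c g)`,
hence `z g = (1 + σ² g)(1 + σ² c g)` on the whole interval. Differentiating this identity gives
`(1 - σ⁴ c g²) g' = -g²`, and with `w = 1/g` both sides of the claim reduce to
`(1 - σ⁴ c g²) / (1 + σ² c g)`.
-/

open Filter Topology

lemma lt_of_mul_one_add_sqrt_sq_lt {s c x : ℝ} (hs : 0 < s) (hx : s * (1 + √c) ^ 2 < x) :
    s < x ∧ s * c < x := by
  have hc : c ≤ √c ^ 2 := Real.sq_sqrt' (x := c) ▸ le_max_left c 0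
  have hsqrt : 0 ≤ √c := Real.sqrt_nonneg c
  constructor <;> nlinarith

section FixedPoint

variable {K : Type*} [Field K] {x s c m m' : K}

lemma eq_of_one_add_mul_one_div_neg_eq_zero (h : 1 + s * (1 / -x) = 0) : x = s := by
  rcases eq_or_ne x 0 with rfl | hx
  · simp at h
  · field_simp at h
    linear_combination h

/-- Were a denominator zero, `1 / 0 = 0` would turn the other equation into `x = s` or `x = s * c`. -/
lemma one_add_mul_ne_zero_of_fixedPoint (hs : x ≠ s) (hsc : x ≠ s * c)
    (hm : m = 1 / (-x * (1 + s * m'))) (hm' : m' = 1 / (-x * (1 + s * c * m))) :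
    1 + s * m' ≠ 0 ∧ 1 + s * c * m ≠ 0 := by
  constructor
  · intro h
    rw [h, mul_zero, div_zero] at hm
    rw [hm, mul_zero, add_zero, mul_one] at hm'
    exact hs (eq_of_one_add_mul_one_div_neg_eq_zero (hm' ▸ h))
  · intro h
    rw [h, mul_zero, div_zero] at hm'
    rw [hm', mul_zero, add_zero, mul_one] at hm
    exact hsc (eq_of_one_add_mul_one_div_neg_eq_zero (hm ▸ h))

lemma mul_denom_eq_one_of_fixedPoint (hx : x ≠ 0) (hs : x ≠ s) (hsc : x ≠ s * c)
    (hm : m = 1 / (-x * (1 + s * m'))) (hm' : m' = 1 / (-x * (1 + s * c * m))) :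
    m * (-x * (1 + s * m')) = 1 ∧ m' * (-x * (1 + s * c * m)) = 1 := by
  obtain ⟨h, h'⟩ := one_add_mul_ne_zero_of_fixedPoint hs hsc hm hm'
  constructor
  · rw [hm]; exact one_div_mul_cancel (mul_ne_zero (neg_ne_zero.2 hx) h)
  · rw [hm']; exact one_div_mul_cancel (mul_ne_zero (neg_ne_zero.2 hx) h')

lemma mul_prod_eq_of_mul_denom_eq_one (h : m * (-x * (1 + s * m')) = 1)
    (h' : m' * (-x * (1 + s * c * m)) = 1) :
    x * (x * m * m') = (1 + s * (x * m * m')) * (1 + s * c * (x * m * m')) := by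
  linear_combination (1 + s * (x * m * m')) * h' - x * m' * h

lemma div_eq_of_mul_denom_eq_one {d : K} (h : m * (-x * (1 + s * m')) = 1)
    (h' : m' * (-x * (1 + s * c * m)) = 1)
    (hd : (1 - s * (s * c) * (x * m * m') ^ 2) * d = -(x * m * m') ^ 2) :
    ((1 / (x * m * m')) ^ 2 - s ^ 2 * c) / (1 / (x * m * m') * (1 / (x * m * m') + s * c)) =
      x * m ^ 2 * m' / d := by
  have hx : x ≠ 0 := by rintro rfl; simp at h
  have hm : m ≠ 0 := left_ne_zero_of_mul_eq_one h
  have hm' : m' ≠ 0 := left_ne_zero_of_mul_eq_one h'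
  have hg : x * m * m' ≠ 0 := mul_ne_zero (mul_ne_zero hx hm) hm'
  have hd0 : d ≠ 0 := by
    rintro rfl
    exact hg (pow_eq_zero_iff two_ne_zero |>.1 (by linear_combination hd))
  have hden : 1 + s * c * (x * m * m') ≠ 0 := by
    have : 1 + s * c * (x * m * m') = -x * m' := by linear_combination -h'
    rw [this]; exact mul_ne_zero (neg_ne_zero.2 hx) hm'
  rw [div_eq_div_iff _ hd0]
  · field_simp
    linear_combination hd + x * m * m' * m * h'
  · refine mul_ne_zero (one_div_ne_zero hg) ?_
    rw [div_add' _ _ _ hg]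
    exact div_ne_zero hden hg

end FixedPoint

lemma one_sub_mul_sq_mul_eq_of_eventuallyEq {g : ℝ → ℂ} {a b g' : ℂ} {x : ℝ}
    (hg : HasDerivAt g g' x)
    (h : ∀ᶠ t : ℝ in 𝓝 x, (t : ℂ) * g t = (1 + a * g t) * (1 + b * g t)) :
    (1 - a * b * g x ^ 2) * g' = -g x ^ 2 := by
  have hL : HasDerivAt (fun t : ℝ => (t : ℂ) * g t) (1 * g x + x * g') x :=
    (hasDerivAt_id x).ofReal_comp.mul hg
  have hR : HasDerivAt (fun t => (1 + a * g t) * (1 + b * g t))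
      (a * g' * (1 + b * g x) + (1 + a * g x) * (b * g')) x :=
    ((hg.const_mul a).const_add 1).mul ((hg.const_mul b).const_add 1)
  have hderiv := hL.unique (hR.congr_of_eventuallyEq h)
  linear_combination g x * hderiv - g' * h.self_of_nhds

theorem stmt6_general (σ2 c : ℝ) (hσ : 0 < σ2) (m mt : ℝ → ℂ)
    (hdm : ∀ x ∈ Set.Ioi (σ2 * (1 + Real.sqrt c) ^ 2),
      DifferentiableAt ℝ m x ∧ DifferentiableAt ℝ mt x)
    (heq : ∀ x ∈ Set.Ioi (σ2 * (1 + Real.sqrt c) ^ 2),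
      m x = 1 / (-(x : ℂ) * (1 + (σ2 : ℂ) * mt x)) ∧
        mt x = 1 / (-(x : ℂ) * (1 + (σ2 : ℂ) * (c : ℂ) * m x)))
    (x : ℝ) (hx : x ∈ Set.Ioi (σ2 * (1 + Real.sqrt c) ^ 2))
    (w : ℂ) (hw : w = 1 / ((x : ℂ) * m x * mt x)) :
    (w ^ 2 - (σ2 : ℂ) ^ 2 * (c : ℂ)) / (w * (w + (σ2 : ℂ) * (c : ℂ))) =
      (x : ℂ) * (m x) ^ 2 * mt x / deriv (fun t : ℝ => (t : ℂ) * m t * mt t) x := by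
  have hmul : ∀ t ∈ Set.Ioi (σ2 * (1 + √c) ^ 2),
      m t * (-(t : ℂ) * (1 + σ2 * mt t)) = 1 ∧ mt t * (-(t : ℂ) * (1 + σ2 * c * m t)) = 1 := by
    intro t ht
    obtain ⟨hσt, hσct⟩ := lt_of_mul_one_add_sqrt_sq_lt hσ ht
    exact mul_denom_eq_one_of_fixedPoint (by exact_mod_cast (hσ.trans hσt).ne')
      (by exact_mod_cast hσt.ne') (by exact_mod_cast hσct.ne') (heq t ht).1 (heq t ht).2
  have hderiv : HasDerivAt (fun t : ℝ => (t : ℂ) * m t * mt t)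
      (deriv (fun t : ℝ => (t : ℂ) * m t * mt t) x) x :=
    ((Complex.ofRealCLM.differentiableAt.mul (hdm x hx).1).mul (hdm x hx).2).hasDerivAt
  have hrel := one_sub_mul_sq_mul_eq_of_eventuallyEq hderiv <| by
    filter_upwards [isOpen_Ioi.mem_nhds hx] with t ht
    exact mul_prod_eq_of_mul_denom_eq_one (hmul t ht).1 (hmul t ht).2
  rw [hw]
  exact div_eq_of_mul_denom_eq_one (hmul x hx).1 (hmul x hx).2 hrel

/-- For `z > σ²(1+√c)²` real, with `m, m̃` the Marcenko-Pastur Stieltjes transforms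
satisfying the coupled fixed-point equations (differentiable there), and
`w(z) = 1/(z m(z) m̃(z))`, the function `h(z) = (w² - σ⁴c)/(w(w+σ²c))` satisfies
`h(z) = z m(z)² m̃(z) / (z m(z) m̃(z))'`. -/
theorem stmt6 (σ2 c : ℝ) (hσ : 0 < σ2) (hc : 0 < c) (m mt : ℝ → ℂ)
    (hdm : ∀ x ∈ Set.Ioi (σ2 * (1 + Real.sqrt c) ^ 2),
      DifferentiableAt ℝ m x ∧ DifferentiableAt ℝ mt x)
    (heq : ∀ x ∈ Set.Ioi (σ2 * (1 + Real.sqrt c) ^ 2),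
      m x = 1 / (-(x : ℂ) * (1 + (σ2 : ℂ) * mt x)) ∧
        mt x = 1 / (-(x : ℂ) * (1 + (σ2 : ℂ) * (c : ℂ) * m x)))
    (x : ℝ) (hx : x ∈ Set.Ioi (σ2 * (1 + Real.sqrt c) ^ 2))
    (w : ℂ) (hw : w = 1 / ((x : ℂ) * m x * mt x)) (hw0 : w ≠ 0)
    (hw2 : w * (w + (σ2 : ℂ) * (c : ℂ)) ≠ 0)
    (hg : deriv (fun t : ℝ => (t : ℂ) * m t * mt t) x ≠ 0) :
    (w ^ 2 - (σ2 : ℂ) ^ 2 * (c : ℂ)) / (w * (w + (σ2 : ℂ) * (c : ℂ))) =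
      (x : ℂ) * (m x) ^ 2 * mt x / deriv (fun t : ℝ => (t : ℂ) * m t * mt t) x :=
  stmt6_general σ2 c hσ m mt hdm heq x hx w hw
end

section
/- Let Z ∈ ℂ^{P×Q}, B ∈ ℂ^{P×Q} of rank K with SVD B = U Λ^{1/2} Ũ*, and X = B + Z. If x > 0 is not a singular value of Z, then x is a singular value of X if and only if det(S(x)) = 0, where S(w) = I_{2K} + J D* (underline(Z) - wI)⁻¹ D, with D the block-diagonal matrix diag(U, Ũ Λ^{1/2}) of size (P+Q) × 2K and J = [[0, I_K],[I_K, 0]]. -/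
open Matrix

lemma smul_one_inv {n : ℕ} (c : ℂ) (hc : c ≠ 0) :
    (c • (1 : Matrix (Fin n) (Fin n) ℂ))⁻¹ = c⁻¹ • 1 := by
  apply Matrix.inv_eq_right_inv
  rw [Matrix.smul_mul, Matrix.mul_smul, one_mul, smul_smul, mul_inv_cancel₀ hc, one_smul]

lemma det_blocks {p q : ℕ} (A : Matrix (Fin p) (Fin q) ℂ) (d : ℂ) (hd : d ≠ 0) :
    (Matrix.fromBlocks (d • 1) A Aᴴ (d • 1)).det
      = d ^ q * (d⁻¹) ^ p * ((d ^ 2 • (1 : Matrix (Fin p) (Fin p) ℂ)) - A * Aᴴ).det := by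
  have hunit : IsUnit (d • 1 : Matrix (Fin q) (Fin q) ℂ).det := by
    rw [Matrix.det_smul, Matrix.det_one]
    simp [hd]
  haveI : Invertible (d • 1 : Matrix (Fin q) (Fin q) ℂ) := Matrix.invertibleOfIsUnitDet _ hunit
  rw [Matrix.det_fromBlocks₂₂, Matrix.invOf_eq_nonsing_inv, smul_one_inv _ hd]
  have hd2 : d⁻¹ * d ^ 2 = d := by field_simp
  have h2 : ((d • 1) - A * (d⁻¹ • (1 : Matrix (Fin q) (Fin q) ℂ)) * Aᴴ : Matrix (Fin p) (Fin p) ℂ)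
      = d⁻¹ • ((d ^ 2 • (1 : Matrix (Fin p) (Fin p) ℂ)) - A * Aᴴ) := by
    rw [Matrix.mul_smul, Matrix.mul_one, Matrix.smul_mul, smul_sub, smul_smul, hd2]
  rw [h2, Matrix.det_smul, Matrix.det_smul, Matrix.det_one]
  simp [Fintype.card_fin, mul_assoc]

lemma schur_det {p q : ℕ} (A : Matrix (Fin p) (Fin q) ℂ) (c : ℂ) (hc : c ≠ 0) :
    (Matrix.fromBlocks 0 A Aᴴ 0 - c • (1 : Matrix (Fin p ⊕ Fin q) (Fin p ⊕ Fin q) ℂ)).det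
      = (-c) ^ q * ((-c)⁻¹) ^ p * (((-c) ^ 2 • (1 : Matrix (Fin p) (Fin p) ℂ)) - A * Aᴴ).det := by
  have h1 : (Matrix.fromBlocks 0 A Aᴴ 0 - c • (1 : Matrix (Fin p ⊕ Fin q) (Fin p ⊕ Fin q) ℂ))
      = Matrix.fromBlocks ((-c) • 1) A Aᴴ ((-c) • 1) := by
    rw [← Matrix.fromBlocks_one, Matrix.fromBlocks_smul, sub_eq_add_neg, Matrix.fromBlocks_neg,
      Matrix.fromBlocks_add]
    simp
  rw [h1, det_blocks A (-c) (neg_ne_zero.mpr hc)]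

lemma spec_iff_det {n : ℕ} (M : Matrix (Fin n) (Fin n) ℂ) (t : ℂ) :
    t ∈ spectrum ℂ M ↔ (M - t • 1).det = 0 := by
  rw [spectrum.mem_iff, Matrix.isUnit_iff_isUnit_det, isUnit_iff_ne_zero, not_not,
    Algebra.algebraMap_eq_smul_one, ← neg_sub, Matrix.det_neg]
  constructor
  · intro h
    rcases mul_eq_zero.mp h with h | h
    · exact absurd h (pow_ne_zero _ (by norm_num))
    · exact h
  · intro h; simp [h]

/-- Let `X = B + Z` with `B = U Λ^{1/2} Ũ*` of rank `K`. If `x > 0` is not a singular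
value of `Z`, then `x` is a singular value of `X` (i.e. `x²` is an eigenvalue of `X X*`)
iff `det(S(x)) = 0`, where `S(w) = I + J D* (underline(Z) - wI)⁻¹ D`,
`D = diag(U, Ũ Λ^{1/2})` and `J = [[0,I],[I,0]]`. -/
theorem stmt11 (P Q K : ℕ) (Z : Matrix (Fin P) (Fin Q) ℂ)
    (U : Matrix (Fin P) (Fin K) ℂ) (Ut : Matrix (Fin Q) (Fin K) ℂ)
    (Λ : Fin K → ℝ) (hΛ : ∀ k, 0 < Λ k)
    (hU : Uᴴ * U = 1) (hUt : Utᴴ * Ut = 1)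
    (B : Matrix (Fin P) (Fin Q) ℂ)
    (hB : B = U * Matrix.diagonal (fun k => (Real.sqrt (Λ k) : ℂ)) * Utᴴ)
    (hrank : B.rank = K)
    (X : Matrix (Fin P) (Fin Q) ℂ) (hX : X = B + Z)
    (x : ℝ) (hx : 0 < x)
    (hZx : ((x : ℂ) ^ 2) ∉ spectrum ℂ (Z * Zᴴ)) :
    ((x : ℂ) ^ 2 ∈ spectrum ℂ (X * Xᴴ)) ↔
      ((1 : Matrix (Fin K ⊕ Fin K) (Fin K ⊕ Fin K) ℂ) +
        (Matrix.fromBlocks 0 1 1 0 : Matrix (Fin K ⊕ Fin K) (Fin K ⊕ Fin K) ℂ) *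
        (Matrix.fromBlocks U 0 0
          (Ut * Matrix.diagonal (fun k => (Real.sqrt (Λ k) : ℂ))))ᴴ *
        ((Matrix.fromBlocks 0 Z Zᴴ 0) -
          (x : ℂ) • (1 : Matrix (Fin P ⊕ Fin Q) (Fin P ⊕ Fin Q) ℂ))⁻¹ *
        (Matrix.fromBlocks U 0 0
          (Ut * Matrix.diagonal (fun k => (Real.sqrt (Λ k) : ℂ))))).det = 0 := by
  set c : ℂ := (x : ℂ) with hc
  have hc0 : c ≠ 0 := by
    simp [hc, Complex.ofReal_ne_zero]
    exact ne_of_gt hx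
  set Dg : Matrix (Fin K) (Fin K) ℂ := Matrix.diagonal (fun k => (Real.sqrt (Λ k) : ℂ)) with hDg
  set D : Matrix (Fin P ⊕ Fin Q) (Fin K ⊕ Fin K) ℂ := Matrix.fromBlocks U 0 0 (Ut * Dg) with hD
  set J : Matrix (Fin K ⊕ Fin K) (Fin K ⊕ Fin K) ℂ := Matrix.fromBlocks 0 1 1 0 with hJ
  set Az : Matrix (Fin P ⊕ Fin Q) (Fin P ⊕ Fin Q) ℂ :=
    Matrix.fromBlocks 0 Z Zᴴ 0 - c • 1 with hAz
  -- determinant of Az is nonzero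
  have hZdet : (Z * Zᴴ - c ^ 2 • 1).det ≠ 0 := by
    intro h
    exact hZx ((spec_iff_det (Z * Zᴴ) (c ^ 2)).mpr h)
  have hAzdet : Az.det ≠ 0 := by
    rw [hAz, schur_det Z c hc0]
    have h1 : ((-c) ^ 2 • (1 : Matrix (Fin P) (Fin P) ℂ) - Z * Zᴴ)
        = -(Z * Zᴴ - c ^ 2 • 1) := by rw [neg_sub, neg_sq]
    rw [h1, Matrix.det_neg]
    exact mul_ne_zero (mul_ne_zero (pow_ne_zero _ (neg_ne_zero.mpr hc0))
      (pow_ne_zero _ (inv_ne_zero (neg_ne_zero.mpr hc0))))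
      (mul_ne_zero (pow_ne_zero _ (by norm_num)) hZdet)
  have hAzUnit : IsUnit Az.det := isUnit_iff_ne_zero.mpr hAzdet
  -- diagonal is self-adjoint
  have hstar : (star fun k : Fin K => (Real.sqrt (Λ k) : ℂ))
      = fun k : Fin K => (Real.sqrt (Λ k) : ℂ) := by
    funext k
    rw [Pi.star_apply, Complex.star_def, Complex.conj_ofReal]
  have hdiag : Dgᴴ = Dg := by
    rw [hDg, Matrix.diagonal_conjTranspose, hstar]
  -- D * J * Dᴴ = underline B
  have hDJD : D * (J * Dᴴ) = Matrix.fromBlocks 0 B Bᴴ 0 := by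
    rw [hD, hJ, Matrix.fromBlocks_conjTranspose, Matrix.fromBlocks_multiply,
      Matrix.fromBlocks_multiply]
    simp only [Matrix.mul_zero, Matrix.zero_mul, Matrix.mul_one, Matrix.one_mul,
      Matrix.conjTranspose_zero, add_zero, zero_add, Matrix.conjTranspose_mul, hdiag]
    simp [hB, Matrix.conjTranspose_mul, hdiag, Matrix.mul_assoc]
  -- factorization
  have hfact : Matrix.fromBlocks 0 X Xᴴ 0 - c • 1 = Az * (1 + Az⁻¹ * (D * (J * Dᴴ))) := by
    rw [Matrix.mul_add, Matrix.mul_one, ← Matrix.mul_assoc,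
      Matrix.mul_nonsing_inv _ hAzUnit, Matrix.one_mul, hDJD, hAz, hX]
    rw [sub_add_eq_add_sub]
    congr 1
    simp [Matrix.fromBlocks_add, Matrix.conjTranspose_add, add_comm]
  -- Sylvester
  have hsyl : (1 + Az⁻¹ * (D * (J * Dᴴ))).det = (1 + J * Dᴴ * Az⁻¹ * D).det := by
    rw [show Az⁻¹ * (D * (J * Dᴴ)) = (Az⁻¹ * D) * (J * Dᴴ) by simp only [Matrix.mul_assoc],
      Matrix.det_one_add_mul_comm]
    simp only [Matrix.mul_assoc]
  -- main chain
  rw [spec_iff_det]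
  have hXdet : (Matrix.fromBlocks 0 X Xᴴ 0 - c • 1).det
      = Az.det * (1 + J * Dᴴ * Az⁻¹ * D).det := by
    rw [hfact, Matrix.det_mul, hsyl]
  rw [schur_det X c hc0] at hXdet
  have h1 : ((-c) ^ 2 • (1 : Matrix (Fin P) (Fin P) ℂ) - X * Xᴴ)
      = -(X * Xᴴ - c ^ 2 • 1) := by rw [neg_sub, neg_sq]
  rw [h1, Matrix.det_neg] at hXdet
  constructor
  · intro h
    rw [h, mul_zero, mul_zero] at hXdet
    rcases mul_eq_zero.mp hXdet.symm with h' | h'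
    · exact absurd h' hAzdet
    · exact h'
  · intro h
    rw [h, mul_zero] at hXdet
    rcases mul_eq_zero.mp hXdet with h' | h'
    · rcases mul_eq_zero.mp h' with h'' | h''
      · exact absurd h'' (pow_ne_zero _ (neg_ne_zero.mpr hc0))
      · exact absurd h'' (pow_ne_zero _ (inv_ne_zero (neg_ne_zero.mpr hc0)))
    · rcases mul_eq_zero.mp h' with h'' | h''
      · exact absurd h'' (pow_ne_zero _ (by norm_num : (-1:ℂ) ≠ 0))
      · exact h''
end

section
/- Let λ_1 > λ_2 > … > λ_K > 0 and set s = max{k : λ_k > σ²√c} (s = 0 if no such k). Then the solutions x > x⁺ of the equation ∏_{k=1}^K (1 - λ_k x m(x) m̃(x)) = 0 are exactly the s values ρ_k = φ(λ_k) = (λ_k + σ²)(λ_k + σ²c)/λ_k for k = 1,…,s, and these satisfy ρ_1 > ρ_2 > … > ρ_s > x⁺. -/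
/-- For `λ₁ > … > λ_K > 0` and `s` the number of `λₖ` exceeding `σ²√c`, the solutions
`x > x⁺ = σ²(1+√c)²` of `∏ₖ (1 - λₖ x m(x) m̃(x)) = 0` are exactly the values
`ρₖ = φ(λₖ) = (λₖ+σ²)(λₖ+σ²c)/λₖ`, `k = 1,…,s`, and `ρ₁ > … > ρ_s > x⁺`.  Here
`w(x) = 1/(x m(x) m̃(x))` is, on `(x⁺,∞)`, a strictly increasing bijection onto
`(σ²√c, ∞)` with inverse `φ`. -/
theorem stmt13 (σ2 c : ℝ) (hσ : 0 < σ2) (hc : 0 < c) (K : ℕ)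
    (lam : Fin K → ℝ) (hpos : ∀ k, 0 < lam k)
    (hdec : ∀ k l : Fin K, k < l → lam l < lam k)
    (s : ℕ) (hs : ∀ k : Fin K, (k : ℕ) < s ↔ σ2 * Real.sqrt c < lam k)
    (m mt : ℝ → ℂ) (w : ℝ → ℝ)
    (hw : ∀ x ∈ Set.Ioi (σ2 * (1 + Real.sqrt c) ^ 2),
      (w x : ℂ) = 1 / ((x : ℂ) * m x * mt x))
    (hmono : StrictMonoOn w (Set.Ioi (σ2 * (1 + Real.sqrt c) ^ 2)))
    (hbij : Set.BijOn w (Set.Ioi (σ2 * (1 + Real.sqrt c) ^ 2))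
      (Set.Ioi (σ2 * Real.sqrt c)))
    (hinv : ∀ x ∈ Set.Ioi (σ2 * (1 + Real.sqrt c) ^ 2),
      (w x + σ2) * (w x + σ2 * c) / w x = x) :
    (∀ x : ℝ, x ∈ Set.Ioi (σ2 * (1 + Real.sqrt c) ^ 2) →
      ((∏ k, (1 - (lam k : ℂ) * (x : ℂ) * m x * mt x)) = 0 ↔
        ∃ k : Fin K, (k : ℕ) < s ∧ x = (lam k + σ2) * (lam k + σ2 * c) / lam k)) ∧
    (∀ k l : Fin K, k < l → (l : ℕ) < s →
      (lam l + σ2) * (lam l + σ2 * c) / lam l <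
        (lam k + σ2) * (lam k + σ2 * c) / lam k) ∧
    (∀ k : Fin K, (k : ℕ) < s →
      σ2 * (1 + Real.sqrt c) ^ 2 < (lam k + σ2) * (lam k + σ2 * c) / lam k) := by
  have key : ∀ lam0 : ℝ, σ2 * Real.sqrt c < lam0 →
      ∃ x ∈ Set.Ioi (σ2 * (1 + Real.sqrt c) ^ 2), w x = lam0 ∧
        (lam0 + σ2) * (lam0 + σ2 * c) / lam0 = x := by
    intro lam0 hl
    obtain ⟨x, hx, hwx⟩ := hbij.surjOn (Set.mem_Ioi.mpr hl)
    exact ⟨x, hx, hwx, by rw [← hwx]; exact hinv x hx⟩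
  refine ⟨?_, ?_, ?_⟩
  · intro x hx
    have hwx : σ2 * Real.sqrt c < w x := hbij.mapsTo hx
    have hwpos : (0:ℝ) < w x := lt_of_le_of_lt (by positivity) hwx
    have hwne : (w x : ℂ) ≠ 0 := by exact_mod_cast hwpos.ne'
    have hX : (x:ℂ) * m x * mt x = 1 / (w x : ℂ) := by
      rw [hw x hx, one_div_one_div]
    rw [Finset.prod_eq_zero_iff]
    constructor
    · rintro ⟨k, -, hk⟩
      have h1 : (lam k : ℂ) * ((x:ℂ) * m x * mt x) = 1 := by
        linear_combination -hk
      rw [hX] at h1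
      have hlr : lam k = w x := by
        field_simp at h1; exact_mod_cast h1
      refine ⟨k, (hs k).mpr (hlr ▸ hwx), ?_⟩
      rw [hlr]
      exact (hinv x hx).symm
    · rintro ⟨k, hks, hxeq⟩
      obtain ⟨y, hy, hwy, hphi⟩ := key (lam k) ((hs k).mp hks)
      have hxy : x = y := by rw [hxeq, hphi]
      subst hxy
      refine ⟨k, Finset.mem_univ k, ?_⟩
      have hlk : (lam k : ℂ) = (w x : ℂ) := by exact_mod_cast hwy.symm
      have h2 : (1:ℂ) - (lam k : ℂ) * (x:ℂ) * m x * mt x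
          = 1 - (lam k : ℂ) * ((x:ℂ) * m x * mt x) := by ring
      rw [h2, hX, hlk, mul_one_div, div_self hwne, sub_self]
  · intro k l hkl hls
    have hlgt : σ2 * Real.sqrt c < lam l := (hs l).mp hls
    have hkgt : σ2 * Real.sqrt c < lam k := lt_trans hlgt (hdec k l hkl)
    obtain ⟨xk, hxk, hwk, hpk⟩ := key (lam k) hkgt
    obtain ⟨xl, hxl, hwl, hpl⟩ := key (lam l) hlgt
    rw [hpk, hpl]
    have : w xl < w xk := by rw [hwl, hwk]; exact hdec k l hkl
    exact (hmono.lt_iff_lt hxl hxk).mp this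
  · intro k hks
    obtain ⟨x, hx, hwx, hphi⟩ := key (lam k) ((hs k).mp hks)
    rw [hphi]
    exact hx
end
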